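/- arXiv:1908.09742 — 4 statements merged into one kernel-verified Lean document; each statement's English description precedes it below -/
import Mathlib

section
/- Let u be a rational number and p, q nonzero rational numbers with p ≠ q. Define a = −(6p²qu³ − 3p(p+q)u² + 1)/(3p(p−q)), b = (3pqu² − 1)/(3pq), c = (6pq²u³ − 3q(p+q)u² + 1)/(3q(p−q)), and w = (3pq(p+q)u³ − 6pqu² + 1)/(3pq(p−q)). Then a + b + c = u² and a³ + b³ + c³ = w². -/
theorem stmt_5 (u p q : ℚ) (hp : p ≠ 0) (hq : q ≠ 0) (hpq : p ≠ q)
    (a b c w : ℚ)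
    (ha : a = -(6 * p ^ 2 * q * u ^ 3 - 3 * p * (p + q) * u ^ 2 + 1) / (3 * p * (p - q)))
    (hb : b = (3 * p * q * u ^ 2 - 1) / (3 * p * q))
    (hc : c = (6 * p * q ^ 2 * u ^ 3 - 3 * q * (p + q) * u ^ 2 + 1) / (3 * q * (p - q)))
    (hw : w = (3 * p * q * (p + q) * u ^ 3 - 6 * p * q * u ^ 2 + 1) / (3 * p * q * (p - q))) :
    a + b + c = u ^ 2 ∧ a ^ 3 + b ^ 3 + c ^ 3 = w ^ 2 := by
  have hpq' : p - q ≠ 0 := sub_ne_zero.mpr hpq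
  subst ha hb hc hw
  constructor <;> field_simp <;> ring
end

section
/- Let u be a rational number, p, q nonzero rationals with p ≠ q, and suppose a, b, c, w are defined by a = −(6p²qu³ − 3p(p+q)u² + 1)/(3p(p−q)), b = (3pqu² − 1)/(3pq), c = (6pq²u³ − 3q(p+q)u² + 1)/(3q(p−q)), w = (3pq(p+q)u³ − 6pqu² + 1)/(3pq(p−q)). Then a+b = p(u³−w), b+c = q(u³+w), and c+a = 1/(3pq). -/
theorem stmt_7 (u p q : ℚ) (hp : p ≠ 0) (hq : q ≠ 0) (hpq : p ≠ q)
    (a b c w : ℚ)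
    (ha : a = -(6 * p ^ 2 * q * u ^ 3 - 3 * p * (p + q) * u ^ 2 + 1) / (3 * p * (p - q)))
    (hb : b = (3 * p * q * u ^ 2 - 1) / (3 * p * q))
    (hc : c = (6 * p * q ^ 2 * u ^ 3 - 3 * q * (p + q) * u ^ 2 + 1) / (3 * q * (p - q)))
    (hw : w = (3 * p * q * (p + q) * u ^ 3 - 6 * p * q * u ^ 2 + 1) / (3 * p * q * (p - q))) :
    a + b = p * (u ^ 3 - w) ∧ b + c = q * (u ^ 3 + w) ∧ c + a = 1 / (3 * p * q) := by
  have hpq' : p - q ≠ 0 := sub_ne_zero.mpr hpq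
  subst ha hb hc hw
  refine ⟨?_, ?_, ?_⟩ <;> field_simp <;> ring
end

section
/- With u = 1, and p, q nonzero rationals, p ≠ q, the formulas a = −((6q−3)p² − 3pq + 1)/(3p(p−q)), b = (3pq − 1)/(3pq), c = (3(2q−1)pq − 3q² + 1)/(3q(p−q)) satisfy a + b + c = 1 and a³ + b³ + c³ = w² where w = (3pq(p+q) − 6pq + 1)/(3pq(p−q)). -/
theorem stmt_16 (p q : ℚ) (hp : p ≠ 0) (hq : q ≠ 0) (hpq : p ≠ q)
    (a b c w : ℚ)
    (ha : a = -((6 * q - 3) * p ^ 2 - 3 * p * q + 1) / (3 * p * (p - q)))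
    (hb : b = (3 * p * q - 1) / (3 * p * q))
    (hc : c = (3 * (2 * q - 1) * p * q - 3 * q ^ 2 + 1) / (3 * q * (p - q)))
    (hw : w = (3 * p * q * (p + q) - 6 * p * q + 1) / (3 * p * q * (p - q))) :
    a + b + c = 1 ∧ a ^ 3 + b ^ 3 + c ^ 3 = w ^ 2 := by
  have hd : p - q ≠ 0 := sub_ne_zero.mpr hpq
  subst ha hb hc hw
  constructor <;> field_simp <;> ring
end

section
/- For every integer k ≥ 1, the triple (108k², 124k², 129k²) of positive integers has the property that its sum, sum of squares, and sum of cubes are all perfect squares; hence there are infinitely many triples of positive integers with this property. -/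
theorem stmt_19 :
    (∀ k : ℤ, 1 ≤ k →
      IsSquare (108 * k ^ 2 + 124 * k ^ 2 + 129 * k ^ 2) ∧
      IsSquare ((108 * k ^ 2) ^ 2 + (124 * k ^ 2) ^ 2 + (129 * k ^ 2) ^ 2) ∧
      IsSquare ((108 * k ^ 2) ^ 3 + (124 * k ^ 2) ^ 3 + (129 * k ^ 2) ^ 3)) ∧
    {t : ℤ × ℤ × ℤ | 0 < t.1 ∧ 0 < t.2.1 ∧ 0 < t.2.2 ∧
      IsSquare (t.1 + t.2.1 + t.2.2) ∧
      IsSquare (t.1 ^ 2 + t.2.1 ^ 2 + t.2.2 ^ 2) ∧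
      IsSquare (t.1 ^ 3 + t.2.1 ^ 3 + t.2.2 ^ 3)}.Infinite := by
  have main : ∀ k : ℤ, 1 ≤ k →
      IsSquare (108 * k ^ 2 + 124 * k ^ 2 + 129 * k ^ 2) ∧
      IsSquare ((108 * k ^ 2) ^ 2 + (124 * k ^ 2) ^ 2 + (129 * k ^ 2) ^ 2) ∧
      IsSquare ((108 * k ^ 2) ^ 3 + (124 * k ^ 2) ^ 3 + (129 * k ^ 2) ^ 3) := by
    intro k _
    refine ⟨⟨19 * k, by ring⟩, ⟨209 * k ^ 2, by ring⟩, ⟨2305 * k ^ 3, by ring⟩⟩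
  refine ⟨main, ?_⟩
  apply Set.infinite_of_injective_forall_mem
    (f := fun n : ℕ => (108 * ((n : ℤ) + 1) ^ 2, 124 * ((n : ℤ) + 1) ^ 2, 129 * ((n : ℤ) + 1) ^ 2))
  case hi =>
    intro a b h
    simp only [Prod.mk.injEq] at h
    have h1 := h.1
    have : ((a : ℤ) + 1) ^ 2 = ((b : ℤ) + 1) ^ 2 := by linarith
    have h2 : (a : ℤ) + 1 = (b : ℤ) + 1 := by
      nlinarith [sq_nonneg ((a:ℤ) + 1 + (b + 1)), Int.natCast_nonneg a, Int.natCast_nonneg b]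
    exact_mod_cast by linarith
  case hf =>
    intro n
    have hk : (1 : ℤ) ≤ (n : ℤ) + 1 := by exact_mod_cast Nat.le_add_left 1 n
    obtain ⟨s1, s2, s3⟩ := main ((n : ℤ) + 1) hk
    refine ⟨by positivity, by positivity, by positivity, s1, s2, s3⟩
end
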